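/- arXiv:1004.1292 — 4 statements merged into one kernel-verified Lean document; each statement's English description precedes it below -/
import Mathlib

section
/- For integers α ≥ 1, β ≥ 1, r with 1 ≤ r ≤ min(α,β), and j ≥ 0, the number of ways to arrange a sequence of rallies in a side-out game starting with server A, ending with A scoring, with α points for A, β points for B, exactly r A-interruptions and j exchanges, equals C(α+β+j-1, j) · C(α, r) · C(β-1, r-1). Consequently, the probability of this event equals C(α+β+j-1, j) · C(α, r) · C(β-1, r-1) · p_a^α · p_b^β · q^{r+j}, where q = (1-p_a)(1-p_b). -/
open scoped BigOperators
open Filter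

/-- Side-out scoring: a trajectory is the list of rally outcomes, `true` meaning that the
current server wins the rally.  `soScorers srv g` is the list of scorers (`true` = player A),
where `srv` is the current server. -/
def soScorers : Bool → List Bool → List Bool
  | _, [] => []
  | srv, s :: rest => (if s then [srv] else []) ++ soScorers (if s then srv else !srv) rest

/-- Probability weight of a trajectory of rally outcomes: the server wins a rally with
probability `pa` (if A serves) or `pb` (if B serves); rallies are independent. -/
def soWeight (pa pb : ℝ) : Bool → List Bool → ℝ
  | _, [] => 1
  | srv, s :: rest =>
      (if srv then (if s then pa else 1 - pa) else (if s then pb else 1 - pb)) *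
        soWeight pa pb (if s then srv else !srv) rest

/-- Points scored by player A (first server A). -/
def soScoreA (g : List Bool) : ℕ := (soScorers true g).count true

/-- Points scored by player B (first server A). -/
def soScoreB (g : List Bool) : ℕ := (soScorers true g).count false

/-- The trajectory ends with a rally in which A scores a point. -/
def soLastA (g : List Bool) : Prop :=
  g.getLast? = some true ∧ (soScorers true g).getLast? = some true

/-- The trajectory ends with a rally in which B scores a point. -/
def soLastB (g : List Bool) : Prop :=
  g.getLast? = some true ∧ (soScorers true g).getLast? = some false

/-- Number of maximal runs of `false` in a list, the first argument being the previous value. -/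
def falseRuns : Bool → List Bool → ℕ
  | _, [] => 0
  | prev, b :: rest => (if prev && !b then 1 else 0) + falseRuns b rest

/-- Number of A-interruptions: maximal stretches in which B gains the serve from A and
scores at least one point, i.e. maximal blocks of points scored by B. -/
def soInter (g : List Bool) : ℕ := falseRuns true (soScorers true g)

/-- Number of exchanges: pairs of consecutive rallies in which a player gains the right to
serve and immediately loses it without scoring. -/
def exchCount : List Bool → ℕ
  | [] => 0
  | true :: rest => exchCount rest
  | [false] => 0
  | false :: true :: rest => exchCount rest
  | false :: false :: rest => 1 + exchCount rest

/-- Probability of a set of trajectories in the side-out model, first server A. -/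
noncomputable def soPr (pa pb : ℝ) (E : Set (List Bool)) : ℝ :=
  ∑' g : List Bool, Set.indicator E (soWeight pa pb true) g

/-- Conditional expectation of `f` given the event `E` in the side-out model, first server A. -/
noncomputable def soCondExp (pa pb : ℝ) (E : Set (List Bool)) (f : List Bool → ℝ) : ℝ :=
  (∑' g : List Bool, Set.indicator E (fun g => soWeight pa pb true g * f g) g) / soPr pa pb E

/-!
A trajectory that ends with a point (last rally won by the server) is determined by its
sequence `w` of scorers together with the numbers `e i` of exchanges played before the `i`-th
point: each point is a block `(false, false)^(e i)` followed by `[true]` if the scorer already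
served and by `[false, true]` otherwise. Hence the event is in bijection with the product of
* the scorer words with `α` letters A and `β` letters B ending with A and having `r` maximal
  blocks of B, counted by a two-state recursion on the first letter (`C(α, r) C(β-1, r-1)`), and
* the lists of `α + β` naturals with sum `j` (stars and bars, `C(α+β+j-1, j)`).
All these trajectories have the same weight: every exchange contributes `(1-pa)(1-pb)`, and
every A-interruption one side-out `A → B` (factor `1-pa`) and one side-out `B → A`
(factor `1-pb`).
-/

theorem getLast?_ne_of_cons {α : Type*} {x a : α} {l : List α}
    (h : (x :: l).getLast? ≠ some a) :
    l.getLast? ≠ some a := by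
  cases l with
  | nil => simp
  | cons y l => rwa [List.getLast?_cons_cons] at h

theorem ncard_eq_ncard_preimage_cons_add {S : Set (List Bool)} (hS : S.Finite) (hnil : [] ∉ S) :
    S.ncard = (List.cons true ⁻¹' S).ncard + (List.cons false ⁻¹' S).ncard := by
  set T := List.cons true '' (List.cons true ⁻¹' S)
  set F := List.cons false '' (List.cons false ⁻¹' S)
  have hsplit : S = T ∪ F := by
    ext v
    rcases v with _ | ⟨_ | _, v⟩ <;> simp [T, F, hnil]
  have hdisj : Disjoint T F :=
    Set.disjoint_left.2 fun _ ⟨_, _, hu⟩ ⟨_, _, hv⟩ => by simp [← hu] at hv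
  conv_lhs => rw [hsplit]
  rw [Set.ncard_union_eq hdisj (hS.subset (by simp [T])) (hS.subset (by simp [F])),
    List.cons_injective.injOn.ncard_image, List.cons_injective.injOn.ncard_image]

theorem tsum_indicator_eq_ncard_mul {α : Type*} {E : Set α} (hE : E.Finite) {f : α → ℝ}
    {c : ℝ} (hf : ∀ x ∈ E, f x = c) : ∑' x, E.indicator f x = E.ncard * c := by
  have := hE.fintype
  rw [← tsum_subtype, tsum_congr fun x : E => hf x x.2, tsum_fintype, Finset.sum_const,
    nsmul_eq_mul, Finset.card_univ, Set.ncard_eq_toFinset_card']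
  simp

theorem setOf_length_sum_eq_range (n j : ℕ) :
    {e : List ℕ | e.length = n ∧ e.sum = j} =
      Set.range fun P : {P : Fin n → ℕ // ∑ i, P i = j} => List.ofFn P.1 := by
  ext e
  constructor
  · rintro ⟨rfl, rfl⟩
    exact ⟨⟨fun i => e.get i, by simp [← List.sum_ofFn]⟩, List.ofFn_get e⟩
  · rintro ⟨⟨P, rfl⟩, rfl⟩
    simp [List.sum_ofFn]

theorem finite_setOf_length_sum (n j : ℕ) :
    {e : List ℕ | e.length = n ∧ e.sum = j}.Finite := by
  have := Finite.of_equiv _ (Sym.equivNatSumOfFintype (Fin n) j)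
  rw [setOf_length_sum_eq_range]
  exact Set.finite_range _

theorem ncard_setOf_length_sum (n j : ℕ) :
    {e : List ℕ | e.length = n ∧ e.sum = j}.ncard = (n + j - 1).choose j := by
  rw [setOf_length_sum_eq_range, Set.ncard_range_of_injective,
    Nat.card_congr (Sym.equivNatSumOfFintype (Fin n) j).symm, Nat.card_eq_fintype_card,
    Sym.card_sym_eq_choose, Fintype.card_fin]
  intro P Q h
  exact Subtype.ext (List.ofFn_injective h)

def trueRuns : Bool → List Bool → ℕ
  | _, [] => 0
  | prev, b :: rest => (if !prev && b then 1 else 0) + trueRuns b rest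

theorem trueRuns_add_eq_falseRuns_add (p : Bool) {w : List Bool} (hw : w.getLast? = some true) :
    trueRuns p w + (if p then 1 else 0) = falseRuns p w + 1 := by
  induction w generalizing p with
  | nil => simp at hw
  | cons x w ih =>
    cases w with
    | nil => cases p <;> simp_all [trueRuns, falseRuns]
    | cons y w =>
      have := ih x (by simpa [List.getLast?_cons] using hw)
      cases p <;> cases x <;> simp [trueRuns, falseRuns] at this ⊢ <;> omega

theorem falseRuns_append_true (p : Bool) (v : List Bool) :
    falseRuns p (v ++ [true]) = falseRuns p v := by
  induction v generalizing p with
  | nil => cases p <;> rfl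
  | cons x v ih => simp [falseRuns, ih]

def runWords (p : Bool) (a b r : ℕ) : Set (List Bool) :=
  {v | v.count true = a ∧ v.count false = b ∧ falseRuns p v = r}

section runWords

variable {p : Bool} {a b r : ℕ}

theorem runWords_finite : (runWords p a b r).Finite :=
  (List.finite_length_eq Bool (a + b)).subset fun v ⟨ha, hb, _⟩ => by
    show v.length = a + b
    rw [← List.count_true_add_count_false, ha, hb]

theorem nil_notMem_runWords (h : a + b ≠ 0) : [] ∉ runWords p a b r := by
  simp [runWords]; omega

@[simp]
theorem preimage_cons_true_runWords_zero : List.cons true ⁻¹' runWords p 0 b r = ∅ := by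
  ext v; simp [runWords]

@[simp]
theorem preimage_cons_true_runWords :
    List.cons true ⁻¹' runWords p (a + 1) b r = runWords true a b r := by
  ext v; cases p <;> simp [runWords, falseRuns]

@[simp]
theorem preimage_cons_false_runWords_false :
    List.cons false ⁻¹' runWords false a (b + 1) r = runWords false a b r := by
  ext v; simp [runWords, falseRuns]

@[simp]
theorem preimage_cons_false_runWords_true :
    List.cons false ⁻¹' runWords true a (b + 1) (r + 1) = runWords false a b r := by
  ext v; simp [runWords, falseRuns]; omega

theorem runWords_zero_right :
    runWords p a 0 r = if r = 0 then {List.replicate a true} else ∅ := by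
  have hruns : ∀ p n, falseRuns p (List.replicate n true) = 0 := by
    intro p n
    induction n generalizing p with
    | zero => rfl
    | succ n ih => simp [List.replicate_succ, falseRuns, ih]
  ext v
  constructor
  · rintro ⟨ha, hb, hr⟩
    have hv : v = List.replicate a true := by
      rw [List.eq_replicate_iff, ← ha, ← List.count_true_add_count_false, hb]
      exact ⟨rfl, fun x hx => by cases x; exacts [absurd hx (List.count_eq_zero.1 hb), rfl]⟩
    subst hv
    simp [← hr, hruns]
  · split_ifs with hr
    · rintro rfl; simp [runWords, hr, hruns, List.count_replicate]
    · simp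

theorem runWords_true_zero : runWords true a (b + 1) 0 = ∅ := by
  have hruns : ∀ v : List Bool, falseRuns true v = 0 → v.count false = 0 := by
    intro v hv
    induction v with
    | nil => rfl
    | cons x v ih => cases x <;> simp_all [falseRuns]
  refine Set.eq_empty_iff_forall_notMem.2 fun v ⟨_, hb, hr⟩ => ?_
  simp [hruns v hr] at hb

end runWords

theorem ncard_runWords_zero_right (p : Bool) (a r : ℕ) :
    (runWords p a 0 r).ncard = if r = 0 then 1 else 0 := by
  rw [runWords_zero_right]; split_ifs <;> simp

theorem ncard_runWords_split (p : Bool) {a b r : ℕ} (h : a + b ≠ 0) :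
    (runWords p a b r).ncard =
      (List.cons true ⁻¹' runWords p a b r).ncard +
        (List.cons false ⁻¹' runWords p a b r).ncard :=
  ncard_eq_ncard_preimage_cons_add runWords_finite (nil_notMem_runWords h)

theorem ncard_runWords (a b r : ℕ) :
    (runWords false a b r).ncard = a.choose r * b.choose r ∧
      (runWords true a (b + 1) (r + 1)).ncard = (a + 1).choose (r + 1) * b.choose r := by
  induction a generalizing b r with
  | zero =>
    induction b generalizing r with
    | zero =>
      have hF : (runWords false 0 0 r).ncard = Nat.choose 0 r * Nat.choose 0 r := by
        rw [ncard_runWords_zero_right]; cases r <;> simp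
      refine ⟨hF, ?_⟩
      rw [ncard_runWords_split _ (by omega)]
      cases r <;> simp [hF]
    | succ b ih =>
      have hF : (runWords false 0 (b + 1) r).ncard = Nat.choose 0 r * (b + 1).choose r := by
        rw [ncard_runWords_split _ (by omega)]
        cases r <;> simp [(ih _).1]
      refine ⟨hF, ?_⟩
      rw [ncard_runWords_split _ (by omega)]
      cases r <;> simp [hF, Nat.choose_succ_succ]
  | succ a iha =>
    induction b generalizing r with
    | zero =>
      have hF : (runWords false (a + 1) 0 r).ncard = (a + 1).choose r * Nat.choose 0 r := by
        rw [ncard_runWords_zero_right]; cases r <;> simp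
      refine ⟨hF, ?_⟩
      rw [ncard_runWords_split _ (by omega)]
      cases r <;> simp [hF, (iha 0 _).2]
    | succ b ih =>
      have hF : (runWords false (a + 1) (b + 1) r).ncard = (a + 1).choose r * (b + 1).choose r := by
        rw [ncard_runWords_split _ (by omega)]
        cases r with
        | zero => simp [runWords_true_zero, (ih 0).1]
        | succ r => simp [(iha b r).2, (ih _).1, Nat.choose_succ_succ' b]; ring
      refine ⟨hF, ?_⟩
      rw [ncard_runWords_split _ (by omega)]
      simp [hF, (iha _ r).2, Nat.choose_succ_succ' (a + 1)]
      ring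

def scorerWords (p : Bool) (a b r : ℕ) : Set (List Bool) :=
  {w | w.count true = a ∧ w.count false = b ∧ w.getLast? = some true ∧ falseRuns p w = r}

theorem image_append_true_runWords (p : Bool) (a b r : ℕ) :
    (· ++ [true]) '' runWords p a b r = scorerWords p (a + 1) b r := by
  ext w
  constructor
  · rintro ⟨v, ⟨ha, hb, hr⟩, rfl⟩
    simp [scorerWords, ha, hb, hr, falseRuns_append_true]
  · rintro ⟨ha, hb, hlast, hr⟩
    obtain ⟨v, rfl⟩ : ∃ v, w = v ++ [true] :=
      ⟨w.dropLast, (List.dropLast_append_getLast? _ hlast).symm⟩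
    simp only [List.count_append, List.count_singleton, falseRuns_append_true] at ha hb hr
    exact ⟨v, ⟨by simpa using ha, by simpa using hb, hr⟩, rfl⟩

theorem scorerWords_finite (p : Bool) (a b r : ℕ) : (scorerWords p (a + 1) b r).Finite := by
  rw [← image_append_true_runWords]
  exact runWords_finite.image _

theorem ncard_scorerWords (a b r : ℕ) :
    (scorerWords true (a + 1) (b + 1) (r + 1)).ncard = (a + 1).choose (r + 1) * b.choose r := by
  rw [← image_append_true_runWords, (List.append_left_injective _).injOn.ncard_image,
    (ncard_runWords a b r).2]

theorem length_of_mem_scorerWords {p : Bool} {a b r : ℕ} {w : List Bool}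
    (hw : w ∈ scorerWords p a b r) : w.length = a + b := by
  rw [← List.count_true_add_count_false, hw.1, hw.2.1]

def withExchanges : ℕ → List Bool → List Bool
  | 0, l => l
  | k + 1, l => false :: false :: withExchanges k l

section withExchanges

variable (k : ℕ) (l : List Bool)

@[simp]
theorem soScorers_withExchanges (srv : Bool) :
    soScorers srv (withExchanges k l) = soScorers srv l := by
  induction k with
  | zero => rfl
  | succ k ih => simp [withExchanges, soScorers, ih]

@[simp]
theorem exchCount_withExchanges : exchCount (withExchanges k l) = k + exchCount l := by
  induction k with
  | zero => simp [withExchanges]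
  | succ k ih => simp only [withExchanges, exchCount, ih]; omega

@[simp]
theorem soWeight_withExchanges (pa pb : ℝ) (srv : Bool) :
    soWeight pa pb srv (withExchanges k l) = ((1 - pa) * (1 - pb)) ^ k * soWeight pa pb srv l := by
  induction k with
  | zero => simp [withExchanges]
  | succ k ih => cases srv <;> simp [withExchanges, soWeight, ih] <;> ring

theorem getLast?_withExchanges (hl : l ≠ []) : (withExchanges k l).getLast? = l.getLast? := by
  induction k with
  | zero => rfl
  | succ k ih =>
    have hne : withExchanges k l ≠ [] := by cases k <;> simp [withExchanges, hl]
    exact (List.getLast?_append_of_ne_nil [false, false] hne).trans ih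

end withExchanges

/-- The trajectory, started with server `srv`, whose `i`-th point is scored by `w[i]` and
is preceded by `e[i]` exchanges. -/
def soTrajectory : Bool → List Bool → List ℕ → List Bool
  | srv, x :: w, k :: e =>
      withExchanges k ((if x = srv then [true] else [false, true]) ++ soTrajectory x w e)
  | _, _, _ => []

section soTrajectory

variable {w : List Bool} {e : List ℕ}

theorem soScorers_soTrajectory (srv : Bool) (h : w.length = e.length) :
    soScorers srv (soTrajectory srv w e) = w := by
  induction w generalizing srv e with
  | nil => simp [soTrajectory, soScorers]
  | cons x w ih =>
    obtain _ | ⟨k, e⟩ := e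
    · simp at h
    · cases x <;> cases srv <;> simp [soTrajectory, soScorers, ih _ (by simpa using h)]

theorem exchCount_soTrajectory (srv : Bool) (h : w.length = e.length) :
    exchCount (soTrajectory srv w e) = e.sum := by
  induction w generalizing srv e with
  | nil => cases e <;> simp_all [soTrajectory, exchCount]
  | cons x w ih =>
    obtain _ | ⟨k, e⟩ := e
    · simp at h
    · cases x <;> cases srv <;> simp [soTrajectory, exchCount, ih _ (by simpa using h)]

theorem soWeight_soTrajectory (pa pb : ℝ) (srv : Bool) (h : w.length = e.length) :
    soWeight pa pb srv (soTrajectory srv w e) = ((1 - pa) * (1 - pb)) ^ e.sum *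
      (pa ^ w.count true * pb ^ w.count false *
        (1 - pa) ^ falseRuns srv w * (1 - pb) ^ trueRuns srv w) := by
  induction w generalizing srv e with
  | nil => cases e <;> simp_all [soTrajectory, soWeight, falseRuns, trueRuns]
  | cons x w ih =>
    obtain _ | ⟨k, e⟩ := e
    · simp at h
    · cases x <;> cases srv <;>
        simp [soTrajectory, soWeight, falseRuns, trueRuns, ih _ (by simpa using h), pow_add,
          pow_succ] <;> ring

theorem getLast?_soTrajectory (srv : Bool) (h : w.length = e.length) (hw : w ≠ []) :
    (soTrajectory srv w e).getLast? = some true := by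
  induction w generalizing srv e with
  | nil => exact absurd rfl hw
  | cons x w ih =>
    obtain _ | ⟨k, e⟩ := e
    · simp at h
    · rw [soTrajectory, getLast?_withExchanges _ _ (by split_ifs <;> simp)]
      cases w with
      | nil => cases e <;> split_ifs <;> simp_all [soTrajectory]
      | cons y w =>
        rw [List.getLast?_append, ih x (by simpa using h) (by simp)]
        rfl

end soTrajectory

theorem withExchanges_inj {k k' : ℕ} {l l' : List Bool} (hl : ∀ t, l ≠ false :: false :: t)
    (hl' : ∀ t, l' ≠ false :: false :: t) (h : withExchanges k l = withExchanges k' l') :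
    k = k' ∧ l = l' := by
  induction k generalizing k' with
  | zero => cases k' <;> simp_all [withExchanges]
  | succ k ih =>
    cases k' with
    | zero => exact absurd h.symm (hl' _)
    | succ k' => simpa using ih (by simpa [withExchanges] using h)

theorem soTrajectory_inj {srv : Bool} {w w' : List Bool} {e e' : List ℕ}
    (h : w.length = e.length) (h' : w'.length = e'.length) :
    soTrajectory srv w e = soTrajectory srv w' e' ↔ w = w' ∧ e = e' := by
  refine ⟨fun heq => ?_, fun ⟨hw, he⟩ => hw ▸ he ▸ rfl⟩
  obtain rfl : w = w' := by
    rw [← soScorers_soTrajectory srv h, heq, soScorers_soTrajectory srv h']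
  refine ⟨rfl, ?_⟩
  induction w generalizing srv e e' with
  | nil => cases e <;> cases e' <;> simp_all
  | cons x w ih =>
    obtain _ | ⟨k, e⟩ := e
    · simp at h
    obtain _ | ⟨k', e'⟩ := e'
    · simp at h'
    have hblock : ∀ l t,
        (if x = srv then [true] else [false, true]) ++ l ≠ false :: false :: t := by
      intro l t; split_ifs <;> simp
    obtain ⟨rfl, hrest⟩ := withExchanges_inj (hblock _) (hblock _) heq
    simpa using ih (by simpa using h) (by simpa using h') (List.append_cancel_left hrest)

theorem exists_soTrajectory_eq (srv : Bool) {g : List Bool} (hg : g.getLast? ≠ some false) :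
    ∃ w e, w.length = e.length ∧ soTrajectory srv w e = g := by
  induction' h : g.length using Nat.strong_induction_on with n ih generalizing g srv
  subst h
  match g, hg with
  | [], _ => exact ⟨[], [], rfl, rfl⟩
  | [false], hg => simp at hg
  | true :: g, hg =>
    obtain ⟨w, e, hl, rfl⟩ := ih _ (by simp) srv (g := g) (getLast?_ne_of_cons hg) rfl
    exact ⟨srv :: w, 0 :: e, by simp [hl], by simp [soTrajectory, withExchanges]⟩
  | false :: true :: g, hg =>
    obtain ⟨w, e, hl, rfl⟩ := ih _ (by simp) (!srv) (g := g)
      (getLast?_ne_of_cons (getLast?_ne_of_cons hg)) rfl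
    exact ⟨(!srv) :: w, 0 :: e, by simp [hl], by simp [soTrajectory, withExchanges]⟩
  | false :: false :: g, hg =>
    obtain ⟨w, e, hl, rfl⟩ := ih _ (by simp) srv (g := g)
      (getLast?_ne_of_cons (getLast?_ne_of_cons hg)) rfl
    obtain _ | ⟨x, w⟩ := w
    · obtain rfl : e = [] := by simpa using hl.symm
      simp [soTrajectory] at hg
    obtain _ | ⟨k, e⟩ := e
    · simp at hl
    exact ⟨x :: w, (k + 1) :: e, by simpa using hl, rfl⟩

theorem soEvent_eq_image (α β r j : ℕ) :
    {g : List Bool | soScoreA g = α ∧ soScoreB g = β ∧ soLastA g ∧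
        soInter g = r ∧ exchCount g = j} =
      (fun x => soTrajectory true x.1 x.2) ''
        (scorerWords true α β r ×ˢ {e | e.length = α + β ∧ e.sum = j}) := by
  ext g
  constructor
  · rintro ⟨hA, hB, ⟨hlast, hlastA⟩, hr, hj⟩
    obtain ⟨w, e, hl, rfl⟩ := exists_soTrajectory_eq true (g := g) (by simp [hlast])
    simp only [soScoreA, soScoreB, soInter, soScorers_soTrajectory true hl,
      exchCount_soTrajectory true hl] at hA hB hlastA hr hj
    have hw : w ∈ scorerWords true α β r := ⟨hA, hB, hlastA, hr⟩
    exact ⟨(w, e), ⟨hw, by rw [← hl, length_of_mem_scorerWords hw], hj⟩, rfl⟩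
  · rintro ⟨⟨w, e⟩, ⟨hw, hlen, hj⟩, rfl⟩
    have hl : w.length = e.length := by rw [hlen, length_of_mem_scorerWords hw]
    obtain ⟨hA, hB, hlastA, hr⟩ := hw
    simp only [Set.mem_ofPred_eq, soScoreA, soScoreB, soInter, soLastA,
      soScorers_soTrajectory true hl, exchCount_soTrajectory true hl]
    have hw : w ≠ [] := by rintro rfl; simp at hlastA
    exact ⟨hA, hB, ⟨getLast?_soTrajectory true hl hw, hlastA⟩, hr, hj⟩

theorem soWeight_soTrajectory_true (pa pb : ℝ) {w : List Bool} {e : List ℕ}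
    (h : w.length = e.length) (hw : w.getLast? = some true) :
    soWeight pa pb true (soTrajectory true w e) =
      pa ^ w.count true * pb ^ w.count false *
        ((1 - pa) * (1 - pb)) ^ (falseRuns true w + e.sum) := by
  have hruns := trueRuns_add_eq_falseRuns_add true hw
  simp only [if_true, Nat.add_right_cancel_iff] at hruns
  rw [soWeight_soTrajectory pa pb true h, hruns]
  simp only [pow_add, mul_pow]
  ring

theorem stmt_0_general (α β r j : ℕ) (hα : 1 ≤ α) (hβ : 1 ≤ β) (hr1 : 1 ≤ r)
    (pa pb : ℝ) :
    ({g : List Bool | soScoreA g = α ∧ soScoreB g = β ∧ soLastA g ∧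
        soInter g = r ∧ exchCount g = j}).ncard =
      (α + β + j - 1).choose j * α.choose r * (β - 1).choose (r - 1) ∧
    soPr pa pb {g : List Bool | soScoreA g = α ∧ soScoreB g = β ∧ soLastA g ∧
        soInter g = r ∧ exchCount g = j} =
      ((α + β + j - 1).choose j : ℝ) * (α.choose r : ℝ) * ((β - 1).choose (r - 1) : ℝ) *
        pa ^ α * pb ^ β * ((1 - pa) * (1 - pb)) ^ (r + j) := by
  obtain ⟨a, rfl⟩ : ∃ a, α = a + 1 := ⟨α - 1, by omega⟩
  obtain ⟨b, rfl⟩ : ∃ b, β = b + 1 := ⟨β - 1, by omega⟩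
  obtain ⟨s, rfl⟩ : ∃ s, r = s + 1 := ⟨r - 1, by omega⟩
  rw [soEvent_eq_image]
  set S := scorerWords true (a + 1) (b + 1) (s + 1) ×ˢ
    {e : List ℕ | e.length = a + 1 + (b + 1) ∧ e.sum = j}
  have hlen : ∀ x ∈ S, x.1.length = x.2.length := fun x ⟨hw, he, _⟩ => by
    rw [he, length_of_mem_scorerWords hw]
  have hinj : Set.InjOn (fun x => soTrajectory true x.1 x.2) S := fun x hx y hy h =>
    Prod.ext_iff.2 ((soTrajectory_inj (hlen x hx) (hlen y hy)).1 h)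
  have hcard : ((fun x => soTrajectory true x.1 x.2) '' S).ncard =
      (a + 1 + (b + 1) + j - 1).choose j * (a + 1).choose (s + 1) * b.choose s := by
    rw [hinj.ncard_image, Set.ncard_prod, ncard_scorerWords, ncard_setOf_length_sum]
    ring
  have hweight : ∀ g ∈ (fun x => soTrajectory true x.1 x.2) '' S, soWeight pa pb true g =
      pa ^ (a + 1) * pb ^ (b + 1) * ((1 - pa) * (1 - pb)) ^ (s + 1 + j) := by
    rintro _ ⟨x, hx, rfl⟩
    have hl := hlen x hx
    obtain ⟨⟨hA, hB, hlast, hr⟩, -, hj⟩ := hx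
    rw [soWeight_soTrajectory_true pa pb hl hlast, hA, hB, hr, hj]
  have hfin : S.Finite := (scorerWords_finite _ _ _ _).prod (finite_setOf_length_sum _ _)
  refine ⟨by simpa using hcard, ?_⟩
  rw [soPr, tsum_indicator_eq_ncard_mul (hfin.image _) hweight, hcard]
  push_cast
  ring

theorem stmt_0 (α β r j : ℕ) (hα : 1 ≤ α) (hβ : 1 ≤ β) (hr1 : 1 ≤ r) (hr2 : r ≤ min α β)
    (pa pb : ℝ) (hpa0 : 0 ≤ pa) (hpa1 : pa ≤ 1) (hpb0 : 0 ≤ pb) (hpb1 : pb ≤ 1) :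
    ({g : List Bool | soScoreA g = α ∧ soScoreB g = β ∧ soLastA g ∧
        soInter g = r ∧ exchCount g = j}).ncard =
      (α + β + j - 1).choose j * α.choose r * (β - 1).choose (r - 1) ∧
    soPr pa pb {g : List Bool | soScoreA g = α ∧ soScoreB g = β ∧ soLastA g ∧
        soInter g = r ∧ exchCount g = j} =
      ((α + β + j - 1).choose j : ℝ) * (α.choose r : ℝ) * ((β - 1).choose (r - 1) : ℝ) *
        pa ^ α * pb ^ β * ((1 - pa) * (1 - pb)) ^ (r + j) :=
  stmt_0_general α β r j hα hβ hr1 pa pb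
end

section
/- The map q ↦ m(1+q)/(1-q) + 2·(∑_r r w_r(q))/(∑_r w_r(q)), where w_r(q) = C(α,r) C(β-1,r-1) q^r and the sums range over r ∈ {min(β,1),…,min(α,β)} with m = α+β, α ≥ 1, β ≥ 1, is strictly increasing in q on (0,1). -/
open scoped BigOperators

private lemma keylem (x y : ℝ) (hx : 0 ≤ x) (hxy : x ≤ y) (r s : ℕ) (hrs : s ≤ r) :
    (r : ℝ) * x ^ r * y ^ s + (s : ℝ) * x ^ s * y ^ r ≤
      (r : ℝ) * y ^ r * x ^ s + (s : ℝ) * y ^ s * x ^ r := by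
  obtain ⟨d, rfl⟩ : ∃ d, r = s + d := ⟨r - s, by omega⟩
  have hy : 0 ≤ y := hx.trans hxy
  have hpow : x ^ d ≤ y ^ d := pow_le_pow_left₀ hx hxy d
  have hab : x ^ (s + d) * y ^ s ≤ x ^ s * y ^ (s + d) := by
    have h1 : 0 ≤ x ^ s * y ^ s := mul_nonneg (pow_nonneg hx s) (pow_nonneg hy s)
    calc x ^ (s + d) * y ^ s = (x ^ s * y ^ s) * x ^ d := by rw [pow_add]; ring
      _ ≤ (x ^ s * y ^ s) * y ^ d := mul_le_mul_of_nonneg_left hpow h1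
      _ = x ^ s * y ^ (s + d) := by rw [pow_add]; ring
  have hcast : (s : ℝ) ≤ ((s + d : ℕ) : ℝ) := by exact_mod_cast Nat.le_add_right s d
  nlinarith [hab, hcast]

private lemma keylem2 (x y : ℝ) (hx : 0 ≤ x) (hxy : x ≤ y) (r s : ℕ) :
    (r : ℝ) * x ^ r * y ^ s + (s : ℝ) * x ^ s * y ^ r ≤
      (r : ℝ) * y ^ r * x ^ s + (s : ℝ) * y ^ s * x ^ r := by
  rcases le_total s r with h | h
  · exact keylem x y hx hxy r s h
  · have := keylem x y hx hxy s r h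
    linarith

private lemma cross (I : Finset ℕ) (w : ℕ → ℝ) (hw : ∀ r, 0 ≤ w r) (x y : ℝ)
    (hx : 0 ≤ x) (hxy : x ≤ y) :
    (∑ r ∈ I, (r : ℝ) * (w r * x ^ r)) * (∑ s ∈ I, w s * y ^ s) ≤
      (∑ r ∈ I, (r : ℝ) * (w r * y ^ r)) * (∑ s ∈ I, w s * x ^ s) := by
  rw [Finset.sum_mul_sum, Finset.sum_mul_sum]
  have h2 : ∀ (u v : ℝ),
      2 * (∑ r ∈ I, ∑ s ∈ I, (r : ℝ) * (w r * u ^ r) * (w s * v ^ s)) =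
      ∑ r ∈ I, ∑ s ∈ I, ((r : ℝ) * (w r * u ^ r) * (w s * v ^ s)
        + (s : ℝ) * (w s * u ^ s) * (w r * v ^ r)) := by
    intro u v
    have hsw : (∑ r ∈ I, ∑ s ∈ I, (r : ℝ) * (w r * u ^ r) * (w s * v ^ s)) =
        ∑ r ∈ I, ∑ s ∈ I, (s : ℝ) * (w s * u ^ s) * (w r * v ^ r) :=
      Finset.sum_comm
    rw [two_mul]
    nth_rewrite 2 [hsw]
    rw [← Finset.sum_add_distrib]
    exact Finset.sum_congr rfl fun r _ => (Finset.sum_add_distrib).symm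
  have hmain : 2 * (∑ r ∈ I, ∑ s ∈ I, (r : ℝ) * (w r * x ^ r) * (w s * y ^ s)) ≤
      2 * (∑ r ∈ I, ∑ s ∈ I, (r : ℝ) * (w r * y ^ r) * (w s * x ^ s)) := by
    rw [h2 x y, h2 y x]
    refine Finset.sum_le_sum fun r _ => Finset.sum_le_sum fun s _ => ?_
    have hk := keylem2 x y hx hxy r s
    have hwn : 0 ≤ w r * w s := mul_nonneg (hw r) (hw s)
    have h := mul_le_mul_of_nonneg_left hk hwn
    nlinarith [h]
  linarith

theorem stmt_9 (α β : ℕ) (hα : 1 ≤ α) (hβ : 1 ≤ β) :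
    StrictMonoOn (fun q : ℝ =>
      ((α : ℝ) + β) * (1 + q) / (1 - q) +
        2 * (∑ r ∈ Finset.Icc (min β 1) (min α β),
              (r : ℝ) * ((α.choose r : ℝ) * ((β - 1).choose (r - 1) : ℝ) * q ^ r)) /
          (∑ r ∈ Finset.Icc (min β 1) (min α β),
            (α.choose r : ℝ) * ((β - 1).choose (r - 1) : ℝ) * q ^ r))
      (Set.Ioo 0 1) := by
  set I := Finset.Icc (min β 1) (min α β) with hI
  set w : ℕ → ℝ := fun r => (α.choose r : ℝ) * ((β - 1).choose (r - 1) : ℝ) with hw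
  have hwnn : ∀ r, 0 ≤ w r := fun r =>
    mul_nonneg (Nat.cast_nonneg _) (Nat.cast_nonneg _)
  have h1I : 1 ∈ I := by
    rw [hI, Finset.mem_Icc]
    exact ⟨min_le_right _ _, le_min hα hβ⟩
  have hS0pos : ∀ q : ℝ, 0 < q →
      0 < ∑ r ∈ I, (α.choose r : ℝ) * ((β - 1).choose (r - 1) : ℝ) * q ^ r := by
    intro q hq
    refine Finset.sum_pos' (fun r _ => ?_) ⟨1, h1I, ?_⟩
    · positivity
    · have hα' : (0 : ℝ) < α := by exact_mod_cast hα
      simp only [Nat.choose_one_right, Nat.sub_self, Nat.choose_zero_right, pow_one, Nat.cast_one, mul_one]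
      positivity
  intro x hx y hy hxy
  obtain ⟨hx0, hx1⟩ := hx
  obtain ⟨hy0, hy1⟩ := hy
  simp only
  have hS0x := hS0pos x hx0
  have hS0y := hS0pos y hy0
  -- first term strictly increasing
  have hm : (0 : ℝ) < (α : ℝ) + β := by
    have h1 : (0 : ℝ) < α := by exact_mod_cast hα
    have h2 : (0 : ℝ) < β := by exact_mod_cast hβ
    linarith
  have hfirst : ((α : ℝ) + β) * (1 + x) / (1 - x) < ((α : ℝ) + β) * (1 + y) / (1 - y) := by
    rw [div_lt_div_iff₀ (by linarith) (by linarith)]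
    nlinarith [mul_pos hm (sub_pos.2 hxy)]
  -- second term weakly increasing
  have hcross := cross I w hwnn x y hx0.le hxy.le
  have hsecond :
      2 * (∑ r ∈ I, (r : ℝ) * ((α.choose r : ℝ) * ((β - 1).choose (r - 1) : ℝ) * x ^ r)) /
        (∑ r ∈ I, (α.choose r : ℝ) * ((β - 1).choose (r - 1) : ℝ) * x ^ r) ≤
      2 * (∑ r ∈ I, (r : ℝ) * ((α.choose r : ℝ) * ((β - 1).choose (r - 1) : ℝ) * y ^ r)) /
        (∑ r ∈ I, (α.choose r : ℝ) * ((β - 1).choose (r - 1) : ℝ) * y ^ r) := by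
    rw [div_le_div_iff₀ hS0x hS0y]
    have e1 : ∀ q : ℝ, (∑ r ∈ I, (r : ℝ) * ((α.choose r : ℝ) * ((β - 1).choose (r - 1) : ℝ) * q ^ r))
        = ∑ r ∈ I, (r : ℝ) * (w r * q ^ r) := by
      intro q; exact Finset.sum_congr rfl fun r _ => by rw [hw]
    have e2 : ∀ q : ℝ, (∑ r ∈ I, (α.choose r : ℝ) * ((β - 1).choose (r - 1) : ℝ) * q ^ r)
        = ∑ r ∈ I, w r * q ^ r := by
      intro q; exact Finset.sum_congr rfl fun r _ => by rw [hw]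
    rw [e1 x, e1 y, e2 x, e2 y]
    nlinarith [hcross]
  linarith
end

section
/- In an A-served side-out game to n points: P[D = n] = p_a^n, P[D = n+1] = (1-p_a) p_b^n, and P[D = n+2] = n q p_a^n + p_a (1-p_a) p_b^n, where D is the total number of rallies and q = (1-p_a)(1-p_b). -/
open scoped BigOperators
open Filter

/-- A complete side-out game to `n` points: play stops as soon as a player reaches `n` points. -/
def soGame (n : ℕ) (g : List Bool) : Prop :=
  (soScoreA g = n ∧ soScoreB g < n ∨ soScoreB g = n ∧ soScoreA g < n) ∧
    ∀ l : List Bool, l <+: g → l ≠ g → soScoreA l < n ∧ soScoreB l < n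

/-!
The two scores add up to the number of rallies won by the server, so a game of `n + k` rallies
contains at most `k` lost rallies.  Writing `1` for a rally won by the server and `0` for one
lost, the games of length `n`, `n + 1` and `n + 2` are therefore `1ⁿ`, `0 1ⁿ`, `1 0 1ⁿ` and
`1ⁱ 0 0 1ⁿ⁻ⁱ` for `i < n`: any other candidate reaches `n` points before its last rally or not at
all.  Their weights are `pa ^ n`, `(1 - pa) pb ^ n`, `pa (1 - pa) pb ^ n` and
`(1 - pa) (1 - pb) pa ^ n`.
-/

open List

def soServer : Bool → List Bool → Bool
  | srv, [] => srv
  | srv, s :: rest => soServer (if s then srv else !srv) rest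

section Trajectory

variable (pa pb : ℝ) (srv : Bool)

lemma soScorers_append (l₁ l₂ : List Bool) :
    soScorers srv (l₁ ++ l₂) = soScorers srv l₁ ++ soScorers (soServer srv l₁) l₂ := by
  induction l₁ generalizing srv with
  | nil => simp [soScorers, soServer]
  | cons b t ih => simp [soScorers, soServer, ih]

lemma soWeight_append (l₁ l₂ : List Bool) :
    soWeight pa pb srv (l₁ ++ l₂) =
      soWeight pa pb srv l₁ * soWeight pa pb (soServer srv l₁) l₂ := by
  induction l₁ generalizing srv with
  | nil => simp [soWeight, soServer]
  | cons b t ih => simp [soWeight, soServer, ih, mul_assoc]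

@[simp]
lemma soScorers_false_cons (l : List Bool) :
    soScorers srv (false :: l) = soScorers (!srv) l := by
  simp [soScorers]

@[simp]
lemma soWeight_false_cons (l : List Bool) :
    soWeight pa pb srv (false :: l) =
      (if srv then 1 - pa else 1 - pb) * soWeight pa pb (!srv) l := by
  simp [soWeight]

@[simp]
lemma soScorers_replicate_true (m : ℕ) : soScorers srv (replicate m true) = replicate m srv := by
  induction m with
  | zero => rfl
  | succ k ih => simp [replicate_succ, soScorers, ih]

@[simp]
lemma soServer_replicate_true (m : ℕ) : soServer srv (replicate m true) = srv := by
  induction m with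
  | zero => rfl
  | succ k ih => simp [replicate_succ, soServer, ih]

@[simp]
lemma soWeight_replicate_true (m : ℕ) :
    soWeight pa pb srv (replicate m true) = (if srv then pa else pb) ^ m := by
  induction m with
  | zero => simp [soWeight]
  | succ k ih => cases srv <;> simp [replicate_succ, soWeight, ih, pow_succ, mul_comm]

end Trajectory

lemma length_soScorers (srv : Bool) (g : List Bool) :
    (soScorers srv g).length = g.count true := by
  induction g generalizing srv with
  | nil => rfl
  | cons b t ih => cases b <;> simp [soScorers, ih]

lemma soScoreA_add_soScoreB (g : List Bool) : soScoreA g + soScoreB g = g.count true := by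
  rw [soScoreA, soScoreB, count_true_add_count_false, length_soScorers]

lemma soScoreA_le_of_prefix {l g : List Bool} (h : l <+: g) : soScoreA l ≤ soScoreA g := by
  obtain ⟨t, rfl⟩ := h
  simp [soScoreA, soScorers_append]

lemma soScoreB_le_of_prefix {l g : List Bool} (h : l <+: g) : soScoreB l ≤ soScoreB g := by
  obtain ⟨t, rfl⟩ := h
  simp [soScoreB, soScorers_append]

lemma exists_eq_replicate_true_append_false_cons {g : List Bool} (h : false ∈ g) :
    ∃ i t, g = replicate i true ++ false :: t := by
  induction g with
  | nil => simp at h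
  | cons b t ih =>
    cases b
    · exact ⟨0, t, rfl⟩
    · obtain ⟨i, t', rfl⟩ := ih (by simpa using h)
      exact ⟨i + 1, t', rfl⟩

lemma eq_replicate_true_of_false_notMem {g : List Bool} (h : false ∉ g) :
    g = replicate g.length true :=
  eq_replicate_length.2 fun b hb => by
    cases b
    · exact absurd hb h
    · rfl

lemma exists_eq_of_count_false_le_two {g : List Bool} (h : g.count false ≤ 2) :
    (∃ i, g = replicate i true) ∨ (∃ i j, g = replicate i true ++ false :: replicate j true) ∨
      ∃ i j l,
        g = replicate i true ++ false :: (replicate j true ++ false :: replicate l true) := by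
  by_cases h₀ : false ∈ g
  · obtain ⟨i, t, rfl⟩ := exists_eq_replicate_true_append_false_cons h₀
    by_cases h₁ : false ∈ t
    · obtain ⟨j, u, rfl⟩ := exists_eq_replicate_true_append_false_cons h₁
      have h₂ : false ∉ u := by
        rw [← count_eq_zero]
        simp at h
        omega
      exact Or.inr (Or.inr ⟨i, j, u.length, by rw [← eq_replicate_true_of_false_notMem h₂]⟩)
    · exact Or.inr (Or.inl ⟨i, t.length, by rw [← eq_replicate_true_of_false_notMem h₁]⟩)
  · exact Or.inl ⟨g.length, eq_replicate_true_of_false_notMem h₀⟩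

namespace soGame

variable {n : ℕ} {g : List Bool}

lemma le_count_true (hg : soGame n g) : n ≤ g.count true := by
  rw [← soScoreA_add_soScoreB]
  rcases hg.1 with ⟨h, _⟩ | ⟨h, _⟩ <;> omega

lemma count_false_le (hg : soGame n g) : g.count false ≤ g.length - n := by
  have := hg.le_count_true
  have := count_true_add_count_false g
  omega

lemma eq_of_prefix (hg : soGame n g) {l : List Bool} (hl : l <+: g)
    (hw : soScoreA l = n ∨ soScoreB l = n) : l = g := by
  by_contra hne
  have := hg.2 l hl hne
  omega

lemma eq_nil_of_replicate_true_append {i : ℕ} {t : List Bool}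
    (hg : soGame n (replicate i true ++ t)) (hi : n ≤ i) : t = [] := by
  have hp : replicate n true <+: replicate i true ++ t :=
    ⟨replicate (i - n) true ++ t, by
      rw [← append_assoc, ← replicate_add, Nat.add_sub_cancel' hi]⟩
  have := congrArg length (hg.eq_of_prefix hp (Or.inl (by simp [soScoreA])))
  simp only [length_append, length_replicate] at this
  exact length_eq_zero_iff.1 (by omega)

end soGame

lemma soGame_append_true {n : ℕ} {l : List Bool}
    (hw : soScoreA (l ++ [true]) = n ∧ soScoreB (l ++ [true]) < n ∨
      soScoreB (l ++ [true]) = n ∧ soScoreA (l ++ [true]) < n)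
    (hA : soScoreA l < n) (hB : soScoreB l < n) : soGame n (l ++ [true]) := by
  refine ⟨hw, fun l' hl' hne => ?_⟩
  have hl : l' <+: l := (prefix_concat_iff.1 hl').resolve_left hne
  exact ⟨(soScoreA_le_of_prefix hl).trans_lt hA, (soScoreB_le_of_prefix hl).trans_lt hB⟩

lemma setOf_soGame_length_eq {n : ℕ} (hn : 0 < n) :
    {g | soGame n g ∧ g.length = n} = {replicate n true} := by
  ext g
  refine ⟨fun ⟨hg, hlen⟩ => ?_, ?_⟩
  · have hf : g.count false = 0 := by have := hg.count_false_le; omega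
    rw [Set.mem_singleton_iff, eq_replicate_true_of_false_notMem (count_eq_zero.1 hf), hlen]
  · rintro rfl
    obtain ⟨m, rfl⟩ := Nat.exists_eq_add_of_lt hn
    refine ⟨?_, length_replicate⟩
    rw [replicate_succ']
    apply soGame_append_true <;>
      simp [soScoreA, soScoreB, soScorers_append, soScorers, count_replicate]

lemma eq_of_soGame_of_length_eq_add_one {n : ℕ} {g : List Bool} (hg : soGame n g)
    (hlen : g.length = n + 1) : g = false :: replicate n true := by
  have hw := hg.1
  rcases exists_eq_of_count_false_le_two (g := g) (by have := hg.count_false_le; omega) with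
    ⟨i, rfl⟩ | ⟨i, j, rfl⟩ | ⟨i, j, l, rfl⟩
  all_goals simp [soScoreA, soScoreB, soScorers_append, count_replicate] at hw hlen
  · omega
  · rcases hw with ⟨rfl, -⟩ | ⟨rfl, -⟩
    · exact absurd (hg.eq_nil_of_replicate_true_append le_rfl) (cons_ne_nil _ _)
    · obtain rfl : i = 0 := by omega
      rfl
  · omega

lemma setOf_soGame_length_eq_add_one {n : ℕ} (hn : 0 < n) :
    {g | soGame n g ∧ g.length = n + 1} = {false :: replicate n true} := by
  ext g
  refine ⟨fun ⟨hg, hlen⟩ => eq_of_soGame_of_length_eq_add_one hg hlen, ?_⟩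
  rintro rfl
  obtain ⟨m, rfl⟩ := Nat.exists_eq_add_of_lt hn
  refine ⟨?_, by simp⟩
  rw [replicate_succ', ← cons_append]
  apply soGame_append_true <;>
    simp [soScoreA, soScoreB, soScorers_append, soScorers, count_replicate]

lemma eq_of_soGame_of_length_eq_add_two {n : ℕ} {g : List Bool} (hg : soGame n g)
    (hlen : g.length = n + 2) :
    g = true :: false :: replicate n true ∨
      ∃ i < n, replicate i true ++ false :: false :: replicate (n - i) true = g := by
  have hw := hg.1
  rcases exists_eq_of_count_false_le_two (g := g) (by have := hg.count_false_le; omega) with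
    ⟨i, rfl⟩ | ⟨i, j, rfl⟩ | ⟨i, j, l, rfl⟩
  all_goals simp [soScoreA, soScoreB, soScorers_append, count_replicate] at hw hlen
  · omega
  · rcases hw with ⟨rfl, -⟩ | ⟨rfl, -⟩
    · exact absurd (hg.eq_nil_of_replicate_true_append le_rfl) (cons_ne_nil _ _)
    · obtain rfl : i = 1 := by omega
      exact Or.inl rfl
  · rcases hw with ⟨hA, -⟩ | ⟨rfl, -⟩
    · obtain rfl : j = 0 := by omega
      obtain rfl | hl := Nat.eq_zero_or_pos l
      · exact absurd (hg.eq_nil_of_replicate_true_append (by omega)) (cons_ne_nil _ _)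
      · exact Or.inr ⟨i, by omega, by rw [show n - i = l by omega]; rfl⟩
    · obtain ⟨rfl, rfl⟩ : i = 0 ∧ l = 0 := by omega
      have := hg.eq_of_prefix (l := false :: replicate j true) ⟨[false], by simp⟩
        (Or.inr (by simp [soScoreB]))
      simp at this

lemma setOf_soGame_length_eq_add_two {n : ℕ} (hn : 2 ≤ n) :
    {g | soGame n g ∧ g.length = n + 2} =
      ↑(insert (true :: false :: replicate n true) ((Finset.range n).image
        fun i => replicate i true ++ false :: false :: replicate (n - i) true)) := by
  ext g
  simp only [Set.mem_ofPred_eq, Finset.coe_insert, Set.mem_insert_iff, Finset.coe_image,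
    Set.mem_image, Finset.mem_coe, Finset.mem_range]
  refine ⟨fun ⟨hg, hlen⟩ => eq_of_soGame_of_length_eq_add_two hg hlen, ?_⟩
  rintro (rfl | ⟨i, hi, rfl⟩)
  · obtain ⟨m, rfl⟩ := Nat.exists_eq_add_of_lt hn
    refine ⟨?_, by simp⟩
    rw [replicate_succ', ← cons_append, ← cons_append]
    apply soGame_append_true <;>
      simp [soScoreA, soScoreB, soScorers_append, soScorers, count_replicate]
  · refine ⟨?_, by simp; omega⟩
    rw [show n - i = n - i - 1 + 1 by omega, replicate_succ', ← cons_append, ← cons_append,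
      ← append_assoc]
    apply soGame_append_true <;>
      simp [soScoreA, soScoreB, soScorers_append, soScorers, count_replicate] <;> omega

lemma soWeight_replicate_true_append_false_false_cons (pa pb : ℝ) {n i : ℕ} (hi : i ≤ n) :
    soWeight pa pb true (replicate i true ++ false :: false :: replicate (n - i) true) =
      (1 - pa) * (1 - pb) * pa ^ n := by
  rw [soWeight_append, ← pow_mul_pow_sub pa hi]
  simp
  ring

lemma soPr_coe (pa pb : ℝ) (s : Finset (List Bool)) :
    soPr pa pb ↑s = ∑ g ∈ s, soWeight pa pb true g := by
  rw [soPr, tsum_eq_sum (s := s) fun g hg => Set.indicator_of_notMem (by simpa using hg) _]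
  exact Finset.sum_congr rfl fun g hg => Set.indicator_of_mem (by simpa using hg) _

theorem stmt_11_general (n : ℕ) (hn : 2 ≤ n) (pa pb : ℝ) :
    soPr pa pb {g : List Bool | soGame n g ∧ g.length = n} = pa ^ n ∧
    soPr pa pb {g : List Bool | soGame n g ∧ g.length = n + 1} = (1 - pa) * pb ^ n ∧
    soPr pa pb {g : List Bool | soGame n g ∧ g.length = n + 2} =
      (n : ℝ) * ((1 - pa) * (1 - pb)) * pa ^ n + pa * (1 - pa) * pb ^ n := by
  refine ⟨?_, ?_, ?_⟩
  · rw [setOf_soGame_length_eq (by omega), ← Finset.coe_singleton, soPr_coe]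
    simp
  · rw [setOf_soGame_length_eq_add_one (by omega), ← Finset.coe_singleton, soPr_coe]
    simp
  · have hinj : Set.InjOn (fun i => replicate i true ++ false :: false :: replicate (n - i) true)
        (Finset.range n) := fun i _ j _ h => by
      simpa [idxOf_append_of_notMem] using congrArg (idxOf false) h
    have hnotMem : true :: false :: replicate n true ∉ (Finset.range n).image
        fun i => replicate i true ++ false :: false :: replicate (n - i) true := by
      simp only [Finset.mem_image, not_exists, not_and]
      intro i _ h
      simpa [count_replicate] using congrArg (count false) h
    rw [setOf_soGame_length_eq_add_two hn, soPr_coe, Finset.sum_insert hnotMem,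
      Finset.sum_image hinj, Finset.sum_congr rfl fun i hi =>
        soWeight_replicate_true_append_false_false_cons pa pb (Finset.mem_range.1 hi).le]
    simp [soWeight]
    ring

theorem stmt_11 (n : ℕ) (hn : 2 ≤ n) (pa pb : ℝ) (hpa0 : 0 ≤ pa) (hpa1 : pa ≤ 1)
    (hpb0 : 0 ≤ pb) (hpb1 : pb ≤ 1) :
    soPr pa pb {g : List Bool | soGame n g ∧ g.length = n} = pa ^ n ∧
    soPr pa pb {g : List Bool | soGame n g ∧ g.length = n + 1} = (1 - pa) * pb ^ n ∧
    soPr pa pb {g : List Bool | soGame n g ∧ g.length = n + 2} =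
      (n : ℝ) * ((1 - pa) * (1 - pb)) * pa ^ n + pa * (1 - pa) * pb ^ n :=
  stmt_11_general n hn pa pb
end

section
/- For every positive integer n, the identities ∑_{k=0}^{n-1} C(n+k-1, k) = C(2n-1, n-1) and ∑_{k=0}^{n-1} (n+k) C(n+k-1, k) = (2n²/(n+1)) · C(2n-1, n-1) hold; consequently, the mean of n+K, where K has distribution P[K=k] = C(n+k-1,k)/C(2n-1,n-1) on {0,…,n-1}, equals 2n²/(n+1). -/
open scoped BigOperators

lemma aux_sum1 (m : ℕ) :
    (∑ k ∈ Finset.range (m + 1), (m + k).choose k) = (2 * m + 1).choose m := by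
  have h := Nat.sum_range_add_choose m m
  have : (∑ k ∈ Finset.range (m + 1), (m + k).choose k)
      = ∑ k ∈ Finset.range (m + 1), (k + m).choose m := by
    apply Finset.sum_congr rfl
    intro k _
    rw [Nat.add_comm m k, Nat.choose_symm_add]
  rw [this, h, show m + m + 1 = m + (m + 1) by ring, show 2 * m + 1 = m + (m + 1) by ring]
  exact Nat.choose_symm_add.symm

lemma aux_sum2 (m : ℕ) :
    (∑ k ∈ Finset.range (m + 1), (m + 1 + k) * (m + k).choose k)
      = (m + 1) * (2 * m + 2).choose (m + 2) := by
  have key : ∀ k, (m + 1 + k) * (m + k).choose k = (m + k + 1).choose (m + 1) * (m + 1) := by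
    intro k
    have h := Nat.add_one_mul_choose_eq (m + k) m
    have h2 : (m + k).choose m = (m + k).choose k := Nat.choose_symm_add
    rw [h2] at h
    calc (m + 1 + k) * (m + k).choose k = (m + k + 1) * (m + k).choose k := by ring_nf
      _ = (m + k + 1).choose (m + 1) * (m + 1) := h
  calc (∑ k ∈ Finset.range (m + 1), (m + 1 + k) * (m + k).choose k)
      = ∑ k ∈ Finset.range (m + 1), (m + k + 1).choose (m + 1) * (m + 1) := by
        exact Finset.sum_congr rfl fun k _ => key k
    _ = (∑ k ∈ Finset.range (m + 1), (k + (m + 1)).choose (m + 1)) * (m + 1) := by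
        rw [← Finset.sum_mul]
        congr 1
        exact Finset.sum_congr rfl fun k _ => by ring_nf
    _ = (m + (m + 1) + 1).choose (m + 2) * (m + 1) := by
        rw [Nat.sum_range_add_choose m (m + 1)]
    _ = (m + 1) * (2 * m + 2).choose (m + 2) := by
        rw [Nat.mul_comm]
        congr 2
        ring

theorem stmt_19 (n : ℕ) (hn : 1 ≤ n) :
    (∑ k ∈ Finset.range n, (n + k - 1).choose k) = (2 * n - 1).choose (n - 1) ∧
    (∑ k ∈ Finset.range n, ((n : ℝ) + k) * ((n + k - 1).choose k : ℝ)) =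
      2 * (n : ℝ) ^ 2 / ((n : ℝ) + 1) * ((2 * n - 1).choose (n - 1) : ℝ) ∧
    (∑ k ∈ Finset.range n,
        ((n : ℝ) + k) * (((n + k - 1).choose k : ℝ) / ((2 * n - 1).choose (n - 1) : ℝ))) =
      2 * (n : ℝ) ^ 2 / ((n : ℝ) + 1) := by
  obtain ⟨m, rfl⟩ : ∃ m, n = m + 1 := ⟨n - 1, (Nat.succ_pred_eq_of_pos hn).symm⟩
  have hsub : ∀ k : ℕ, m + 1 + k - 1 = m + k := fun k => by omega
  have hsub2 : 2 * (m + 1) - 1 = 2 * m + 1 := by omega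
  have hsub3 : m + 1 - 1 = m := by omega
  have h1 : (∑ k ∈ Finset.range (m + 1), (m + 1 + k - 1).choose k) = (2 * m + 1).choose m := by
    rw [← aux_sum1 m]
    exact Finset.sum_congr rfl fun k _ => by rw [hsub k]
  have hDpos : 0 < (2 * m + 1).choose m := Nat.choose_pos (by omega)
  have hD : ((2 * m + 1).choose m : ℝ) ≠ 0 := by positivity
  -- the second identity
  have h2nat : (∑ k ∈ Finset.range (m + 1), (m + 1 + k) * (m + 1 + k - 1).choose k)
      = (m + 1) * (2 * m + 2).choose (m + 2) := by
    rw [← aux_sum2 m]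
    exact Finset.sum_congr rfl fun k _ => by rw [hsub k]
  have hratio : (m + 2) * (2 * m + 2).choose (m + 2) = (2 * m + 2) * (2 * m + 1).choose m := by
    have h := Nat.add_one_mul_choose_eq (2 * m + 1) (m + 1)
    have hsymm : (2 * m + 1).choose (m + 1) = (2 * m + 1).choose m := by
      rw [show 2 * m + 1 = (m + 1) + m by ring]
      exact Nat.choose_symm_add
    rw [hsymm] at h
    simp only [Nat.succ_eq_add_one, show 2 * m + 1 + 1 = 2 * m + 2 from by ring,
      show m + 1 + 1 = m + 2 from rfl] at h
    rw [mul_comm]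
    exact h.symm
  have h2 : (∑ k ∈ Finset.range (m + 1), (((m : ℝ) + 1) + k) * ((m + 1 + k - 1).choose k : ℝ)) =
      2 * ((m : ℝ) + 1) ^ 2 / (((m : ℝ) + 1) + 1) * (((2 * m + 1).choose m : ℝ)) := by
    have hcast : (∑ k ∈ Finset.range (m + 1), (((m : ℝ) + 1) + k) * ((m + 1 + k - 1).choose k : ℝ))
        = ((∑ k ∈ Finset.range (m + 1), (m + 1 + k) * (m + 1 + k - 1).choose k : ℕ) : ℝ) := by
      push_cast
      exact Finset.sum_congr rfl fun k _ => by push_cast; ring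
    rw [hcast, h2nat]
    have hr : (((m : ℝ) + 2) * ((2 * m + 2).choose (m + 2) : ℝ))
        = (2 * (m : ℝ) + 2) * (((2 * m + 1).choose m : ℝ)) := by
      exact_mod_cast congrArg (Nat.cast (R := ℝ)) hratio
    have hne : ((m : ℝ) + 2) ≠ 0 := by positivity
    push_cast
    field_simp
    nlinarith [hr]
  refine ⟨by exact_mod_cast (by rw [hsub2, hsub3]; exact h1), ?_, ?_⟩
  · have := h2
    push_cast [hsub2, hsub3] at this ⊢
    convert this using 2 <;> push_cast <;> ring
  · have key : (∑ k ∈ Finset.range (m + 1),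
        (((m : ℝ) + 1) + k) * (((m + 1 + k - 1).choose k : ℝ) / (((2 * m + 1).choose m : ℝ)))) =
        (∑ k ∈ Finset.range (m + 1), (((m : ℝ) + 1) + k) * ((m + 1 + k - 1).choose k : ℝ))
          / (((2 * m + 1).choose m : ℝ)) := by
      rw [Finset.sum_div]
      exact Finset.sum_congr rfl fun k _ => by ring
    have h3 : (∑ k ∈ Finset.range (m + 1),
        (((m : ℝ) + 1) + k) * (((m + 1 + k - 1).choose k : ℝ) / (((2 * m + 1).choose m : ℝ)))) =
        2 * ((m : ℝ) + 1) ^ 2 / (((m : ℝ) + 1) + 1) := by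
      rw [key, h2, mul_div_assoc, div_self hD, mul_one]
    push_cast [hsub2, hsub3] at h3 ⊢
    convert h3 using 2 <;> push_cast <;> ring
end
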